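/- arXiv:2605.18259 — 4 statements merged into one kernel-verified Lean document; each statement's English description precedes it below -/
import Mathlib

section
/- Let ρ₁ ≥ ⋯ ≥ ρₙ ≥ 0 satisfy ρₖ ≤ C₀k^{-α} for some C₀ > 0 and α > 1. Then there exists a constant C > 0, depending only on C₀ and α (not on n or λ), such that for every λ > 0, Σₖ₌₁ⁿ ρₖ/(λ + ρₖ) ≤ Cλ^{-1/α}. -/
/-!
With `T = (C₀ / λ) ^ (1 / α)` we have `ρₖ / (λ + ρₖ) ≤ min 1 (ρₖ / λ) ≤ min 1 ((T / (k + 1)) ^ α)`,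
so it suffices to bound `∑ₖ min 1 ((T / (k + 1)) ^ α)` by a multiple of `T`. The first `⌈T⌉`
terms contribute at most `2T`, and comparing the tail with `∫_{⌈T⌉}^∞ x ^ (-α) dx` bounds it
by `T / (α - 1)`.
-/

open Real Finset

lemma sum_Ico_add_one_rpow_neg_le {α : ℝ} (hα : 1 < α) {m : ℕ} (hm : 0 < m) (n : ℕ) :
    ∑ k ∈ Ico m n, ((k : ℝ) + 1) ^ (-α) ≤ (m : ℝ) ^ (1 - α) / (α - 1) := by
  have hα₁ : 0 < α - 1 := by linarith
  have hm' : (0 : ℝ) < m := by exact_mod_cast hm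
  rcases le_total m n with hmn | hnm
  · have hanti : AntitoneOn (fun x : ℝ => x ^ (-α)) (Set.Icc (m : ℝ) n) :=
      fun x hx y _ hxy => rpow_le_rpow_of_nonpos (hm'.trans_le hx.1) hxy (by linarith)
    have hzero : (0 : ℝ) ∉ Set.uIcc (m : ℝ) n := by
      rw [Set.uIcc_of_le (by exact_mod_cast hmn)]
      exact fun h => hm'.not_ge h.1
    calc ∑ k ∈ Ico m n, ((k : ℝ) + 1) ^ (-α)
        ≤ ∫ x in (m : ℝ)..n, x ^ (-α) := by
          simpa only [Nat.cast_add, Nat.cast_one] using hanti.sum_le_integral_Ico hmn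
      _ = ((m : ℝ) ^ (1 - α) - (n : ℝ) ^ (1 - α)) / (α - 1) := by
          rw [integral_rpow (Or.inr ⟨by linarith, hzero⟩), neg_add_eq_sub,
            ← neg_sub α 1, div_neg, ← neg_div, neg_sub]
      _ ≤ (m : ℝ) ^ (1 - α) / (α - 1) := by
          gcongr
          exact sub_le_self _ (by positivity)
  · rw [Ico_eq_empty_of_le hnm, sum_empty]
    positivity

lemma natCeil_mul_min_one_rpow_le {α T : ℝ} (hα : 1 ≤ α) (hT : 0 ≤ T) :
    (⌈T⌉₊ : ℝ) * min 1 (T ^ α) ≤ 2 * T := by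
  rcases le_total T 1 with hT₁ | hT₁
  · calc (⌈T⌉₊ : ℝ) * min 1 (T ^ α) ≤ 1 * T ^ α := by
          gcongr
          · exact_mod_cast Nat.ceil_le.mpr (by exact_mod_cast hT₁)
          · exact min_le_right _ _
      _ ≤ 2 * T := by linarith [rpow_le_self_of_le_one hT hT₁ hα]
  · calc (⌈T⌉₊ : ℝ) * min 1 (T ^ α) ≤ (T + 1) * 1 := by
          gcongr
          · exact (Nat.ceil_lt_add_one hT).le
          · exact min_le_left _ _
      _ ≤ 2 * T := by linarith

lemma sum_range_min_one_rpow_le {α T : ℝ} (hα : 1 < α) (hT : 0 < T) (n : ℕ) :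
    ∑ k ∈ range n, min 1 (T ^ α * ((k : ℝ) + 1) ^ (-α)) ≤ (2 + 1 / (α - 1)) * T := by
  set f : ℕ → ℝ := fun k => min 1 (T ^ α * ((k : ℝ) + 1) ^ (-α))
  set m := ⌈T⌉₊
  have hm : 0 < m := Nat.ceil_pos.mpr hT
  have hα₁ : 0 < α - 1 := by linarith
  have head : ∑ k ∈ range m, f k ≤ m * min 1 (T ^ α) := by
    calc ∑ k ∈ range m, f k ≤ ∑ _k ∈ range m, min 1 (T ^ α) := by
          refine sum_le_sum fun k _ => min_le_min_left _ ?_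
          exact mul_le_of_le_one_right (by positivity)
            (rpow_le_one_of_one_le_of_nonpos (by linarith [k.cast_nonneg (α := ℝ)])
              (by linarith))
      _ = m * min 1 (T ^ α) := by rw [sum_const, card_range, nsmul_eq_mul]
  have tail : ∑ k ∈ Ico m (m + n), f k ≤ T / (α - 1) := by
    calc ∑ k ∈ Ico m (m + n), f k
        ≤ ∑ k ∈ Ico m (m + n), T ^ α * ((k : ℝ) + 1) ^ (-α) :=
          sum_le_sum fun k _ => min_le_right _ _
      _ ≤ T ^ α * ((m : ℝ) ^ (1 - α) / (α - 1)) := by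
          rw [← mul_sum]
          gcongr
          exact sum_Ico_add_one_rpow_neg_le hα hm _
      _ ≤ T ^ α * (T ^ (1 - α) / (α - 1)) := by
          gcongr T ^ α * (?_ / _)
          exact rpow_le_rpow_of_nonpos hT (Nat.le_ceil T) (by linarith : 1 - α ≤ 0)
      _ = T / (α - 1) := by
          rw [mul_div_assoc', ← rpow_add hT, add_sub_cancel, rpow_one]
  calc ∑ k ∈ range n, f k ≤ ∑ k ∈ range (m + n), f k :=
        sum_le_sum_of_subset_of_nonneg (range_subset_range.mpr (Nat.le_add_left n m))
          fun k _ _ => le_min zero_le_one (by positivity)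
    _ = ∑ k ∈ range m, f k + ∑ k ∈ Ico m (m + n), f k :=
        (sum_range_add_sum_Ico f (Nat.le_add_right m n)).symm
    _ ≤ 2 * T + T / (α - 1) :=
        add_le_add (head.trans (natCeil_mul_min_one_rpow_le hα.le hT.le)) tail
    _ = (2 + 1 / (α - 1)) * T := by ring

lemma div_add_self_le_min_one_div {ρ lam : ℝ} (hρ : 0 ≤ ρ) (hlam : 0 < lam) :
    ρ / (lam + ρ) ≤ min 1 (ρ / lam) :=
  le_min ((div_le_one (by positivity)).mpr (by linarith))
    (div_le_div_of_nonneg_left hρ hlam (by linarith))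

/-- If `ρₖ ≤ C₀ k^{-α}` with `α > 1`, then there is `C = C(C₀,α)` (independent of `n`
and `λ`) with `Σₖ ρₖ/(λ+ρₖ) ≤ C λ^{-1/α}` for every `λ > 0`. -/
theorem stmt2 (C₀ α : ℝ) (hC₀ : 0 < C₀) (hα : 1 < α) :
    ∃ C > (0 : ℝ), ∀ (n : ℕ) (ρ : Fin n → ℝ),
      (∀ k, 0 ≤ ρ k) →
      (∀ i j : Fin n, i ≤ j → ρ j ≤ ρ i) →
      (∀ k : Fin n, ρ k ≤ C₀ * ((k : ℝ) + 1) ^ (-α)) →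
      ∀ lam : ℝ, 0 < lam →
        ∑ k, ρ k / (lam + ρ k) ≤ C * lam ^ (-1 / α) := by
  have hα₁ : 0 < α - 1 := by linarith
  refine ⟨(2 + 1 / (α - 1)) * C₀ ^ (1 / α), by positivity, ?_⟩
  intro n ρ hρ _ hdecay lam hlam
  set T := (C₀ / lam) ^ (1 / α)
  have hTα : T ^ α = C₀ / lam := by
    rw [← rpow_mul (by positivity), one_div_mul_cancel (by linarith), rpow_one]
  have hT : T = C₀ ^ (1 / α) * lam ^ (-1 / α) := by
    rw [show T = (C₀ / lam) ^ (1 / α) from rfl, div_rpow hC₀.le hlam.le, neg_div,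
      rpow_neg hlam.le, div_eq_mul_inv]
  have hterm (k : Fin n) :
      ρ k / (lam + ρ k) ≤ min 1 (T ^ α * (((k : ℕ) : ℝ) + 1) ^ (-α)) := by
    refine (div_add_self_le_min_one_div (hρ k) hlam).trans (min_le_min_left _ ?_)
    rw [hTα, div_mul_eq_mul_div]
    exact div_le_div_of_nonneg_right (hdecay k) hlam.le
  calc ∑ k, ρ k / (lam + ρ k)
      ≤ ∑ k ∈ range n, min 1 (T ^ α * ((k : ℝ) + 1) ^ (-α)) := by
        rw [← Fin.sum_univ_eq_sum_range (fun k => min 1 (T ^ α * ((k : ℝ) + 1) ^ (-α)))]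
        exact sum_le_sum fun k _ => hterm k
    _ ≤ (2 + 1 / (α - 1)) * T := sum_range_min_one_rpow_le hα (by positivity) n
    _ = (2 + 1 / (α - 1)) * C₀ ^ (1 / α) * lam ^ (-1 / α) := by rw [hT, mul_assoc]
end

section
/- Let e ∈ ℝⁿ, λ > 0, and let {ψₖ} be a W-orthonormal basis with (Aψᵢ)·(Aψⱼ) = ρᵢδᵢⱼ, ρₖ ≥ 0. Define the energy norm |||v|||_λ² = λ‖v‖_W² + ‖Av‖². Then sup over nonzero v ∈ ℝⁿ of (e·Av)²/|||v|||_λ² is at most Σₖ₌₁ⁿ (λ + ρₖ)^{-1}(e·Aψₖ)². -/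
/-!
Expand `v = ∑ₖ cₖ ψₖ`. By the two orthogonality relations, `e·Av = ∑ₖ cₖ (e·Aψₖ)` and
`|||v|||_λ² = ∑ₖ (λ + ρₖ) cₖ²`, so the claim is the Cauchy–Schwarz inequality with weights
`λ + ρₖ > 0`.
-/

open Matrix Finset

/-- Weighted Cauchy–Schwarz; a vanishing denominator is covered by `x / 0 = 0`. -/
theorem sq_sum_mul_div_sum_weight_mul_sq_le {ι R : Type*} [Field R] [LinearOrder R]
    [IsStrictOrderedRing R] (s : Finset ι) (c b d : ι → R) (hd : ∀ i ∈ s, 0 < d i) :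
    (∑ i ∈ s, c i * b i) ^ 2 / ∑ i ∈ s, d i * c i ^ 2 ≤ ∑ i ∈ s, (d i)⁻¹ * b i ^ 2 := by
  have hdc : ∀ i ∈ s, 0 ≤ d i * c i ^ 2 := fun i hi => by have := hd i hi; positivity
  have hdb : ∀ i ∈ s, 0 ≤ (d i)⁻¹ * b i ^ 2 := fun i hi => by have := hd i hi; positivity
  refine div_le_of_le_mul₀ (sum_nonneg hdc) (sum_nonneg hdb) ?_
  rw [mul_comm]
  refine sum_sq_le_sum_mul_sum_of_sq_le_mul s hdc hdb fun i hi => le_of_eq ?_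
  field_simp [(hd i hi).ne']

section Expansion

variable {ι m R : Type*} [Fintype ι] [Fintype m] [CommRing R]

theorem dotProduct_mulVec_sum_smul (u : m → R) (M : Matrix m m R) (ψ : ι → m → R)
    (c : ι → R) : u ⬝ᵥ M *ᵥ (∑ k, c k • ψ k) = ∑ k, c k * (u ⬝ᵥ M *ᵥ ψ k) := by
  simp only [mulVec_sum, dotProduct_sum, mulVec_smul, dotProduct_smul, smul_eq_mul]

theorem sum_smul_dotProduct_mulVec_sum_smul [DecidableEq ι] (M : Matrix m m R)
    (ψ : ι → m → R) (g : ι → R) (hψ : ∀ i j, ψ i ⬝ᵥ M *ᵥ ψ j = if i = j then g i else 0)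
    (c : ι → R) :
    (∑ k, c k • ψ k) ⬝ᵥ M *ᵥ (∑ k, c k • ψ k) = ∑ k, g k * c k ^ 2 := by
  simp only [dotProduct_mulVec_sum_smul, sum_dotProduct, smul_dotProduct, smul_eq_mul, hψ,
    mul_ite, mul_zero, sum_ite_eq', mem_univ, if_true]
  exact sum_congr rfl fun k _ => by ring

end Expansion

theorem mulVec_dotProduct_mulVec {m n R : Type*} [Fintype m] [Fintype n] [CommRing R]
    (A : Matrix m n R) (u w : n → R) : A *ᵥ u ⬝ᵥ A *ᵥ w = u ⬝ᵥ (Aᵀ * A) *ᵥ w := by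
  rw [← mulVec_mulVec, dotProduct_mulVec u Aᵀ, vecMul_transpose]

theorem stmt4_general (n : ℕ) (A W : Matrix (Fin n) (Fin n) ℝ)
    (ρ : Fin n → ℝ) (ψ : Fin n → (Fin n → ℝ))
    (hρ : ∀ k, 0 ≤ ρ k)
    (horth : ∀ i j, ψ i ⬝ᵥ W.mulVec (ψ j) = if i = j then 1 else 0)
    (hAorth : ∀ i j, A.mulVec (ψ i) ⬝ᵥ A.mulVec (ψ j) = ρ i * (if i = j then 1 else 0))
    (hbasis : ∀ v : Fin n → ℝ, v = ∑ k, (ψ k ⬝ᵥ W.mulVec v) • ψ k)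
    (e : Fin n → ℝ) (lam : ℝ) (hlam : 0 < lam) :
    ∀ v : Fin n → ℝ, v ≠ 0 →
      (e ⬝ᵥ A.mulVec v) ^ 2 / (lam * (v ⬝ᵥ W.mulVec v) + A.mulVec v ⬝ᵥ A.mulVec v) ≤
        ∑ k, (lam + ρ k)⁻¹ * (e ⬝ᵥ A.mulVec (ψ k)) ^ 2 := by
  intro v _
  set c := fun k => ψ k ⬝ᵥ W *ᵥ v
  have hWnorm : v ⬝ᵥ W *ᵥ v = ∑ k, 1 * c k ^ 2 := by
    rw [hbasis v]
    exact sum_smul_dotProduct_mulVec_sum_smul W ψ 1 horth c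
  have hA : A *ᵥ v ⬝ᵥ A *ᵥ v = ∑ k, ρ k * c k ^ 2 := by
    rw [mulVec_dotProduct_mulVec, hbasis v]
    refine sum_smul_dotProduct_mulVec_sum_smul _ ψ ρ (fun i j => ?_) c
    rw [← mulVec_dotProduct_mulVec, hAorth, mul_ite, mul_one, mul_zero]
  have hnum : e ⬝ᵥ A *ᵥ v = ∑ k, c k * (e ⬝ᵥ A *ᵥ ψ k) := by
    rw [hbasis v]
    exact dotProduct_mulVec_sum_smul e A ψ c
  have henergy : lam * (v ⬝ᵥ W *ᵥ v) + A *ᵥ v ⬝ᵥ A *ᵥ v = ∑ k, (lam + ρ k) * c k ^ 2 := by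
    rw [hWnorm, hA, mul_sum, ← sum_add_distrib]
    exact sum_congr rfl fun k _ => by ring
  rw [hnum, henergy]
  exact sq_sum_mul_div_sum_weight_mul_sq_le _ _ _ _ fun k _ => by linarith [hρ k]

/-- With the energy norm `|||v|||_λ² = λ‖v‖_W² + ‖Av‖²`, the quotient
`(e·Av)²/|||v|||_λ²` is bounded over nonzero `v` by `Σₖ (λ+ρₖ)⁻¹ (e·Aψₖ)²`. -/
theorem stmt4 (n : ℕ) (A W : Matrix (Fin n) (Fin n) ℝ) (hW : W.PosDef)
    (ρ : Fin n → ℝ) (ψ : Fin n → (Fin n → ℝ))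
    (hρ : ∀ k, 0 ≤ ρ k)
    (heig : ∀ k, (Aᵀ * A).mulVec (ψ k) = ρ k • W.mulVec (ψ k))
    (horth : ∀ i j, ψ i ⬝ᵥ W.mulVec (ψ j) = if i = j then 1 else 0)
    (hAorth : ∀ i j, A.mulVec (ψ i) ⬝ᵥ A.mulVec (ψ j) = ρ i * (if i = j then 1 else 0))
    (hbasis : ∀ v : Fin n → ℝ, v = ∑ k, (ψ k ⬝ᵥ W.mulVec v) • ψ k)
    (e : Fin n → ℝ) (lam : ℝ) (hlam : 0 < lam) :
    ∀ v : Fin n → ℝ, v ≠ 0 →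
      (e ⬝ᵥ A.mulVec v) ^ 2 / (lam * (v ⬝ᵥ W.mulVec v) + A.mulVec v ⬝ᵥ A.mulVec v) ≤
        ∑ k, (lam + ρ k)⁻¹ * (e ⬝ᵥ A.mulVec (ψ k)) ^ 2 :=
  stmt4_general n A W ρ ψ hρ horth hAorth hbasis e lam hlam
end

section
/- Let x* ∈ ℝⁿ, b = Ax* + e, and let x_λ be the unique minimizer of x ↦ ‖Ax − b‖² + λ‖x‖_W², λ > 0, W symmetric positive definite. Then x_λ satisfies the variational equation λ(x_λ, u)_W + (Ax_λ, Au) = (b, Au) for all u ∈ ℝⁿ, and the error bound |||x_λ − x*|||_λ ≤ λ^{1/2}‖x*‖_W + sup_{v≠0} (e·Av)/|||v|||_λ holds, where |||v|||_λ² = λ‖v‖_W² + ‖Av‖². -/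
open Matrix

/-! Since `t ↦ J(x_λ + t u)` is a quadratic minimized at `t = 0`, its linear coefficient vanishes;
this is the variational equation. Testing it with `u = x_λ − x*` and substituting `b = A x* + e`
gives the energy identity `|||x_λ − x*|||² = e ⬝ᵥ A(x_λ − x*) − λ (x*, x_λ − x*)_W`. The first term
is at most the dual norm of `v ↦ e ⬝ᵥ A v` times `|||x_λ − x*|||`, and by Cauchy–Schwarz in
`(·,·)_W` and `λ^{1/2} ‖v‖_W ≤ |||v|||` the second is at most `λ^{1/2} ‖x*‖_W |||x_λ − x*|||`;
dividing by `|||x_λ − x*|||` gives the bound. -/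

theorem eq_zero_of_forall_nonneg_quadratic {K : Type*} [Field K] [LinearOrder K]
    [IsStrictOrderedRing K] {a c : K} (h : ∀ t : K, 0 ≤ a * (t * t) + c * t) : c = 0 := by
  have := discrim_le_zero (a := a) (b := c) (c := 0) (by simpa using h)
  rw [discrim] at this
  nlinarith

namespace Matrix

variable {ι : Type*} [Fintype ι]

theorem dotProduct_self_nonneg {R : Type*} [Ring R] [LinearOrder R] [IsStrictOrderedRing R]
    (v : ι → R) : 0 ≤ v ⬝ᵥ v :=
  Finset.sum_nonneg fun i _ ↦ mul_self_nonneg (v i)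

theorem abs_dotProduct_le (v w : ι → ℝ) : |v ⬝ᵥ w| ≤ √(v ⬝ᵥ v) * √(w ⬝ᵥ w) := by
  rw [← Real.sqrt_mul (dotProduct_self_nonneg v)]
  refine Real.abs_le_sqrt ?_
  simpa only [dotProduct, sq] using Finset.sum_mul_sq_le_sq_mul_sq Finset.univ v w

theorem IsHermitian.dotProduct_mulVec_comm {M : Matrix ι ι ℝ} (hM : M.IsHermitian) (x y : ι → ℝ) :
    x ⬝ᵥ M *ᵥ y = y ⬝ᵥ M *ᵥ x := by
  rw [dotProduct_mulVec, ← mulVec_transpose, ← conjTranspose_eq_transpose_of_trivial,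
    hM.eq, dotProduct_comm]

theorem PosSemidef.dotProduct_mulVec_self_nonneg {M : Matrix ι ι ℝ} (hM : M.PosSemidef)
    (x : ι → ℝ) : 0 ≤ x ⬝ᵥ M *ᵥ x := by
  simpa using hM.dotProduct_mulVec_nonneg x

theorem PosSemidef.abs_dotProduct_mulVec_le {M : Matrix ι ι ℝ} (hM : M.PosSemidef) (x y : ι → ℝ) :
    |x ⬝ᵥ M *ᵥ y| ≤ √(x ⬝ᵥ M *ᵥ x) * √(y ⬝ᵥ M *ᵥ y) := by
  have hquad : ∀ t : ℝ, 0 ≤ (y ⬝ᵥ M *ᵥ y) * (t * t) + 2 * (x ⬝ᵥ M *ᵥ y) * t + x ⬝ᵥ M *ᵥ x := by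
    intro t
    convert hM.dotProduct_mulVec_self_nonneg (x + t • y) using 1
    simp only [mulVec_add, mulVec_smul, dotProduct_add, add_dotProduct, dotProduct_smul,
      smul_dotProduct, smul_eq_mul, hM.isHermitian.dotProduct_mulVec_comm y x]
    ring
  have := discrim_le_zero hquad
  rw [discrim] at this
  rw [← Real.sqrt_mul (hM.dotProduct_mulVec_self_nonneg x)]
  exact Real.abs_le_sqrt (by nlinarith)

end Matrix

namespace Tikhonov

variable {m ι : Type*} [Fintype m] [Fintype ι]
  (A : Matrix m ι ℝ) (W : Matrix ι ι ℝ) (lam : ℝ)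

def energyInner (u v : ι → ℝ) : ℝ := lam * (u ⬝ᵥ W *ᵥ v) + A *ᵥ u ⬝ᵥ A *ᵥ v

noncomputable def energyNorm (v : ι → ℝ) : ℝ := √(energyInner A W lam v v)

def objective (b : m → ℝ) (x : ι → ℝ) : ℝ :=
  (A *ᵥ x - b) ⬝ᵥ (A *ᵥ x - b) + lam * (x ⬝ᵥ W *ᵥ x)

noncomputable def noiseDualNorm (e : m → ℝ) : ℝ :=
  ⨆ v : {v : ι → ℝ // v ≠ 0}, e ⬝ᵥ A *ᵥ v.1 / energyNorm A W lam v.1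

variable {A W lam}

theorem energyNorm_neg (v : ι → ℝ) : energyNorm A W lam (-v) = energyNorm A W lam v := by
  simp only [energyNorm, energyInner, mulVec_neg, dotProduct_neg, neg_dotProduct, neg_neg]

theorem energyInner_sub_left (u u' v : ι → ℝ) :
    energyInner A W lam (u - u') v = energyInner A W lam u v - energyInner A W lam u' v := by
  simp only [energyInner, mulVec_sub, sub_dotProduct]
  ring

theorem objective_add_smul (hW : W.IsHermitian) (b : m → ℝ) (x u : ι → ℝ) (t : ℝ) :
    objective A W lam b (x + t • u) = objective A W lam b x +
      (energyInner A W lam u u * (t * t) + 2 * (energyInner A W lam x u - b ⬝ᵥ A *ᵥ u) * t) := by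
  simp only [objective, energyInner, mulVec_add, mulVec_smul, sub_dotProduct, dotProduct_sub,
    add_dotProduct, dotProduct_add, smul_dotProduct, dotProduct_smul, smul_eq_mul,
    hW.dotProduct_mulVec_comm u x, dotProduct_comm (A *ᵥ x) (A *ᵥ u),
    dotProduct_comm b (A *ᵥ u)]
  ring

theorem energyInner_eq_of_isMinimizer (hW : W.IsHermitian) {b : m → ℝ} {x : ι → ℝ}
    (hmin : ∀ y, objective A W lam b x ≤ objective A W lam b y) (u : ι → ℝ) :
    energyInner A W lam x u = b ⬝ᵥ A *ᵥ u := by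
  have := eq_zero_of_forall_nonneg_quadratic (a := energyInner A W lam u u)
    (c := 2 * (energyInner A W lam x u - b ⬝ᵥ A *ᵥ u)) fun t ↦ by
    have := hmin (x + t • u)
    rw [objective_add_smul hW] at this
    linarith
  linarith

theorem energyInner_sub_self_eq {b e : m → ℝ} {x xstar : ι → ℝ} (hb : b = A *ᵥ xstar + e)
    (hvar : ∀ u, energyInner A W lam x u = b ⬝ᵥ A *ᵥ u) :
    energyInner A W lam (x - xstar) (x - xstar) =
      e ⬝ᵥ A *ᵥ (x - xstar) - lam * (xstar ⬝ᵥ W *ᵥ (x - xstar)) := by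
  rw [energyInner_sub_left, hvar, hb, add_dotProduct, energyInner]
  ring

section Estimates

variable (A) (hW : W.PosSemidef) (hlam : 0 ≤ lam)
include hW hlam

theorem energyInner_self_nonneg (v : ι → ℝ) : 0 ≤ energyInner A W lam v v :=
  add_nonneg (mul_nonneg hlam (hW.dotProduct_mulVec_self_nonneg v)) (dotProduct_self_nonneg _)

omit hW in
theorem sqrt_mul_sqrt_le_energyNorm (v : ι → ℝ) :
    √lam * √(v ⬝ᵥ W *ᵥ v) ≤ energyNorm A W lam v := by
  rw [← Real.sqrt_mul hlam]
  exact Real.sqrt_le_sqrt (le_add_of_nonneg_right (dotProduct_self_nonneg _))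

theorem neg_mul_dotProduct_mulVec_le (x v : ι → ℝ) :
    -(lam * (x ⬝ᵥ W *ᵥ v)) ≤ √lam * √(x ⬝ᵥ W *ᵥ x) * energyNorm A W lam v := by
  calc -(lam * (x ⬝ᵥ W *ᵥ v)) ≤ √lam * √lam * |x ⬝ᵥ W *ᵥ v| := by
        rw [Real.mul_self_sqrt hlam]
        nlinarith [neg_abs_le (x ⬝ᵥ W *ᵥ v)]
    _ ≤ √lam * √lam * (√(x ⬝ᵥ W *ᵥ x) * √(v ⬝ᵥ W *ᵥ v)) := by
        gcongr
        exact hW.abs_dotProduct_mulVec_le x v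
    _ = √lam * √(x ⬝ᵥ W *ᵥ x) * (√lam * √(v ⬝ᵥ W *ᵥ v)) := by ring
    _ ≤ √lam * √(x ⬝ᵥ W *ᵥ x) * energyNorm A W lam v := by
        gcongr
        exact sqrt_mul_sqrt_le_energyNorm A hlam v

theorem dotProduct_mulVec_le_energyNorm (e : m → ℝ) (v : ι → ℝ) :
    e ⬝ᵥ A *ᵥ v ≤ √(e ⬝ᵥ e) * energyNorm A W lam v := by
  calc e ⬝ᵥ A *ᵥ v ≤ √(e ⬝ᵥ e) * √(A *ᵥ v ⬝ᵥ A *ᵥ v) :=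
        (le_abs_self _).trans (abs_dotProduct_le _ _)
    _ ≤ √(e ⬝ᵥ e) * energyNorm A W lam v := by
        gcongr
        exact Real.sqrt_le_sqrt
          (le_add_of_nonneg_left (mul_nonneg hlam (hW.dotProduct_mulVec_self_nonneg v)))

theorem bddAbove_noiseDualNorm (e : m → ℝ) :
    BddAbove (Set.range fun v : {v : ι → ℝ // v ≠ 0} ↦ e ⬝ᵥ A *ᵥ v.1 / energyNorm A W lam v.1) :=
  ⟨√(e ⬝ᵥ e), by
    rintro _ ⟨v, rfl⟩
    exact div_le_of_le_mul₀ (Real.sqrt_nonneg _) (Real.sqrt_nonneg _)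
      (dotProduct_mulVec_le_energyNorm A hW hlam e v)⟩

theorem dotProduct_mulVec_le_noiseDualNorm_mul (e : m → ℝ) (v : ι → ℝ) :
    e ⬝ᵥ A *ᵥ v ≤ noiseDualNorm A W lam e * energyNorm A W lam v := by
  rcases (Real.sqrt_nonneg (energyInner A W lam v v)).eq_or_lt with hzero | hpos
  -- if `energyNorm v = 0` the quotient in the supremum is a junk `0`: use Cauchy–Schwarz instead
  · simpa [energyNorm, ← hzero] using dotProduct_mulVec_le_energyNorm A hW hlam e v
  · have hv : v ≠ 0 := by rintro rfl; simp [energyInner] at hpos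
    exact (div_le_iff₀ hpos).mp (le_ciSup (bddAbove_noiseDualNorm A hW hlam e) ⟨v, hv⟩)

theorem noiseDualNorm_nonneg (e : m → ℝ) : 0 ≤ noiseDualNorm A W lam e := by
  rcases isEmpty_or_nonempty {v : ι → ℝ // v ≠ 0} with _ | ⟨v, hv⟩
  · exact (Real.iSup_of_isEmpty _).ge
  · have h₁ := le_ciSup (bddAbove_noiseDualNorm A hW hlam e) ⟨v, hv⟩
    have h₂ := le_ciSup (bddAbove_noiseDualNorm A hW hlam e) ⟨-v, neg_ne_zero.mpr hv⟩
    simp only [energyNorm_neg, mulVec_neg, dotProduct_neg, neg_div] at h₂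
    rw [noiseDualNorm]
    linarith

theorem energyNorm_sub_le {b e : m → ℝ} {x xstar : ι → ℝ} (hb : b = A *ᵥ xstar + e)
    (hvar : ∀ u, energyInner A W lam x u = b ⬝ᵥ A *ᵥ u) :
    energyNorm A W lam (x - xstar) ≤ √lam * √(xstar ⬝ᵥ W *ᵥ xstar) + noiseDualNorm A W lam e := by
  have hsq : energyNorm A W lam (x - xstar) * energyNorm A W lam (x - xstar) =
      e ⬝ᵥ A *ᵥ (x - xstar) - lam * (xstar ⬝ᵥ W *ᵥ (x - xstar)) := by
    rw [energyNorm, Real.mul_self_sqrt (energyInner_self_nonneg A hW hlam _),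
      energyInner_sub_self_eq hb hvar]
  have hle := add_le_add (dotProduct_mulVec_le_noiseDualNorm_mul A hW hlam e (x - xstar))
    (neg_mul_dotProduct_mulVec_le A hW hlam xstar (x - xstar))
  set N := energyNorm A W lam (x - xstar)
  set R := √lam * √(xstar ⬝ᵥ W *ᵥ xstar) + noiseDualNorm A W lam e
  have hNN : N * N ≤ R * N := by linarith
  have hR : 0 ≤ R := add_nonneg (by positivity) (noiseDualNorm_nonneg A hW hlam e)
  have hN : 0 ≤ N := Real.sqrt_nonneg _
  rcases hN.eq_or_lt with hN0 | hNpos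
  · rw [← hN0]
    exact hR
  · exact le_of_mul_le_mul_right hNN hNpos

end Estimates

end Tikhonov

/-- The Tikhonov minimizer `x_λ` of `‖Ax−b‖² + λ‖x‖_W²` satisfies the variational
equation `λ(x_λ,u)_W + (Ax_λ,Au) = (b,Au)` and the error bound
`|||x_λ − x*|||_λ ≤ λ^{1/2}‖x*‖_W + sup_{v≠0} (e·Av)/|||v|||_λ`. -/
theorem stmt6 (n : ℕ) (A W : Matrix (Fin n) (Fin n) ℝ) (hW : W.PosDef)
    (xstar e b : Fin n → ℝ) (hb : b = A.mulVec xstar + e)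
    (lam : ℝ) (hlam : 0 < lam) (xlam : Fin n → ℝ)
    (hmin : ∀ x : Fin n → ℝ,
      (A.mulVec xlam - b) ⬝ᵥ (A.mulVec xlam - b) + lam * (xlam ⬝ᵥ W.mulVec xlam) ≤
      (A.mulVec x - b) ⬝ᵥ (A.mulVec x - b) + lam * (x ⬝ᵥ W.mulVec x)) :
    (∀ u : Fin n → ℝ,
        lam * (xlam ⬝ᵥ W.mulVec u) + A.mulVec xlam ⬝ᵥ A.mulVec u = b ⬝ᵥ A.mulVec u) ∧
    Real.sqrt (lam * ((xlam - xstar) ⬝ᵥ W.mulVec (xlam - xstar)) +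
        (A.mulVec (xlam - xstar)) ⬝ᵥ (A.mulVec (xlam - xstar))) ≤
      Real.sqrt lam * Real.sqrt (xstar ⬝ᵥ W.mulVec xstar) +
      ⨆ v : {v : Fin n → ℝ // v ≠ 0},
        (e ⬝ᵥ A.mulVec v.1) /
          Real.sqrt (lam * (v.1 ⬝ᵥ W.mulVec v.1) + (A.mulVec v.1) ⬝ᵥ (A.mulVec v.1)) := by
  have hvar := Tikhonov.energyInner_eq_of_isMinimizer hW.isHermitian hmin
  exact ⟨hvar, Tikhonov.energyNorm_sub_le A hW.posSemidef hlam.le hb hvar⟩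
end

section
/- Let W be symmetric positive definite, A ∈ ℝ^{n×n}, and define B = (W^{-1/2}AᵀAW^{-1/2})^{1/4}W^{1/2}. Then for every u ∈ ℝⁿ, ‖Bu‖² ≤ ‖u‖_W · ‖Au‖. -/
open Matrix

/-- With `B = (W^{-1/2}AᵀAW^{-1/2})^{1/4}W^{1/2}` (where `W^{1/2}` is the symmetric
positive definite square root of `W` and the fourth root is the positive semidefinite
one), one has `‖Bu‖² ≤ ‖u‖_W ‖Au‖` for every `u`. -/
theorem stmt9 (n : ℕ) (A W : Matrix (Fin n) (Fin n) ℝ) (hW : W.PosDef)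
    (Wsqrt : Matrix (Fin n) (Fin n) ℝ) (hWs : Wsqrt.PosDef) (hWs2 : Wsqrt * Wsqrt = W)
    (Q : Matrix (Fin n) (Fin n) ℝ) (hQ : Q.PosSemidef)
    (hQ4 : Q ^ 4 = Wsqrt⁻¹ * (Aᵀ * A) * Wsqrt⁻¹)
    (u : Fin n → ℝ) :
    ((Q * Wsqrt).mulVec u) ⬝ᵥ ((Q * Wsqrt).mulVec u) ≤
      Real.sqrt (u ⬝ᵥ W.mulVec u) * Real.sqrt (A.mulVec u ⬝ᵥ A.mulVec u) := by
  have hQsym : Qᵀ = Q := hQ.isHermitian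
  have hWsym : Wsqrtᵀ = Wsqrt := hWs.isHermitian
  have hWinv : Wsqrt⁻¹ * Wsqrt = 1 :=
    nonsing_inv_mul _ ((isUnit_iff_isUnit_det _).mp hWs.isUnit)
  set v : Fin n → ℝ := Wsqrt.mulVec u with hv
  set w : Fin n → ℝ := (Q * Q).mulVec v with hw
  -- LHS = v ⬝ w
  have h1 : ((Q * Wsqrt).mulVec u) ⬝ᵥ ((Q * Wsqrt).mulVec u) = v ⬝ᵥ w := by
    rw [← mulVec_mulVec, hw, ← mulVec_mulVec, dotProduct_mulVec, ← mulVec_transpose, hQsym,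
      mulVec_mulVec]
    exact dotProduct_comm _ _
  -- u ⬝ W u = v ⬝ v
  have h2 : u ⬝ᵥ W.mulVec u = v ⬝ᵥ v := by
    rw [← hWs2, ← mulVec_mulVec, dotProduct_mulVec, ← mulVec_transpose, hWsym]
  -- w ⬝ w = A u ⬝ A u
  have h3 : w ⬝ᵥ w = A.mulVec u ⬝ᵥ A.mulVec u := by
    have hQQ : (Q * Q)ᵀ = Q * Q := by rw [transpose_mul, hQsym]
    have step : w ⬝ᵥ w = v ⬝ᵥ (Q ^ 4).mulVec v := by
      rw [hw, dotProduct_mulVec, ← mulVec_transpose, hQQ, mulVec_mulVec,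
        show Q * Q * (Q * Q) = Q ^ 4 from by rw [show (4:ℕ) = 2 + 2 from rfl, pow_add, pow_two], dotProduct_comm]
    rw [step, hQ4, hv, mulVec_mulVec,
      show Wsqrt⁻¹ * (Aᵀ * A) * Wsqrt⁻¹ * Wsqrt = Wsqrt⁻¹ * (Aᵀ * A) from by
        rw [mul_assoc, hWinv, mul_one],
      ← mulVec_mulVec, dotProduct_mulVec (Wsqrt.mulVec u), ← mulVec_transpose,
      transpose_nonsing_inv, hWsym, mulVec_mulVec, hWinv, one_mulVec,
      ← mulVec_mulVec, dotProduct_mulVec u Aᵀ, ← mulVec_transpose, transpose_transpose]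
  rw [h1, h2, ← h3]
  calc v ⬝ᵥ w = ∑ i, v i * w i := rfl
    _ ≤ Real.sqrt (∑ i, v i ^ 2) * Real.sqrt (∑ i, w i ^ 2) :=
        Real.sum_mul_le_sqrt_mul_sqrt _ _ _
    _ = Real.sqrt (v ⬝ᵥ v) * Real.sqrt (w ⬝ᵥ w) := by
        simp [dotProduct, sq]
end
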